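/- arXiv:2507.02224 — 5 statements merged into one kernel-verified Lean document; each statement's English description precedes it below -/
import Mathlib

section
/- Assume σ² v_- < γ p_- (i.e. σ = σ_ε given by σ² = γ p_- /(v_- + ((γ+1)/2)ε) with ε > 0). Then the matrix J from the linearization of the traveling-wave system at (v_-, u_-, θ_-) satisfies det J > 0 and tr J < 0, hence the unstable manifold at (v_-, u_-, θ_-) is one-dimensional. -/
theorem unstable_manifold_one_dimensional
    (σ vm pm R τm μm κm γ : ℝ)
    (hσ : 0 < σ) (hv : 0 < vm) (hp : 0 < pm) (hR : 0 < R)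
    (hτ : 0 < τm) (hμ : 0 < μm) (hκ : 0 < κm) (hγ : 1 < γ)
    (hlax : σ ^ 2 * vm < γ * pm)
    (J : Matrix (Fin 3) (Fin 3) ℝ)
    (hJ : J = !![-σ * vm / τm, -vm / τm, 0;
                 -pm / μm, -σ * vm / μm, R / μm;
                 0, pm * vm / κm, -σ * R * vm / ((γ - 1) * κm)]) :
    0 < J.det ∧ J.trace < 0 := by
  subst hJ
  have hγ1 : (0:ℝ) < γ - 1 := by linarith
  constructor
  · rw [show ((!![-σ * vm / τm, -vm / τm, 0;
                 -pm / μm, -σ * vm / μm, R / μm;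
                 0, pm * vm / κm, -σ * R * vm / ((γ - 1) * κm)] : Matrix (Fin 3) (Fin 3) ℝ)).det
        = σ * R * vm ^ 2 * (γ * pm - σ ^ 2 * vm) / (τm * μm * κm * (γ - 1)) by
      rw [Matrix.det_fin_three]
      norm_num [Matrix.cons_val_zero, Matrix.cons_val_one, Matrix.cons_val_two, Matrix.tail_cons, Matrix.head_cons]
      field_simp
      ring]
    apply div_pos
    · have : 0 < γ * pm - σ ^ 2 * vm := by linarith
      positivity
    · positivity
  · rw [Matrix.trace_fin_three]
    norm_num [Matrix.cons_val_zero, Matrix.cons_val_one, Matrix.cons_val_two, Matrix.tail_cons, Matrix.head_cons]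
    have h1 : -(σ * vm) / τm < 0 := div_neg_of_neg_of_pos (by nlinarith) hτ
    have h2 : -(σ * vm) / μm < 0 := div_neg_of_neg_of_pos (by nlinarith) hμ
    have h3 : -(σ * R * vm) / ((γ - 1) * κm) < 0 :=
      div_neg_of_neg_of_pos (by nlinarith [mul_pos (mul_pos hσ hR) hv]) (by positivity)
    linarith
end

section
/- Suppose w₀ ∈ ℝ and θ ∈ ℝ satisfy the critical-point equations: ε σ_ε² w₀ + Rθ/(v_- + ε w₀) − p_- = 0 and −(σ_ε R/(γ−1))(θ − θ_-) + ε² (σ_ε³/2) w₀² − ε σ_ε p_- w₀ = 0, where σ_ε² = γ p_- /(v_- + ((γ+1)/2)ε), p_- = Rθ_- /v_-, ε ≠ 0, σ_ε ≠ 0, and v_- + ε w₀ > 0. Then w₀ = 0 or w₀ = 1. -/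
/-!
Eliminating θ between the two equations, using `R θ_- = p_- v_-` and
`σ_ε² (v_- + (γ+1)ε/2) = γ p_-`, leaves `((γ+1)/2) ε² σ_ε² (w₀² - w₀) = 0`,
and the prefactor is nonzero.
-/

theorem critical_point_quadratic_eq_zero {K : Type*} [Field K] [CharZero K]
    {R γ vm θm pm ε σ w₀ θ : K}
    (hpm : pm * vm = R * θm)
    (hσε : σ ^ 2 * (vm + (γ + 1) / 2 * ε) = γ * pm)
    (heq1 : R * θ = (pm - ε * σ ^ 2 * w₀) * (vm + ε * w₀))
    (heq2 : R * (θ - θm) = (γ - 1) * (ε ^ 2 * (σ ^ 2 / 2) * w₀ ^ 2 - ε * pm * w₀)) :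
    (γ + 1) / 2 * ε ^ 2 * σ ^ 2 * (w₀ ^ 2 - w₀) = 0 := by
  linear_combination heq1 - heq2 - ε * w₀ * hσε + hpm

theorem critical_points_are_zero_or_one_general
    (R γ vm θm pm ε σ w₀ θ : ℝ)
    (hγ : 1 < γ) (hv : 0 < vm)
    (hpm : pm = R * θm / vm)
    (hε : ε ≠ 0) (hσ : σ ≠ 0)
    (hσε : σ ^ 2 = γ * pm / (vm + (γ + 1) / 2 * ε))
    (hpos : 0 < vm + ε * w₀)
    (heq1 : ε * σ ^ 2 * w₀ + R * θ / (vm + ε * w₀) - pm = 0)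
    (heq2 : -(σ * R / (γ - 1)) * (θ - θm) + ε ^ 2 * (σ ^ 3 / 2) * w₀ ^ 2
        - ε * σ * pm * w₀ = 0) :
    w₀ = 0 ∨ w₀ = 1 := by
  have hγ1 : γ - 1 ≠ 0 := sub_ne_zero.mpr hγ.ne'
  have hpm' : pm * vm = R * θm := by rw [hpm, div_mul_cancel₀ _ hv.ne']
  have hD : vm + (γ + 1) / 2 * ε ≠ 0 := by
    rintro hD
    rw [hD, div_zero, sq_eq_zero_iff] at hσε
    exact hσ hσε
  have hσε' : σ ^ 2 * (vm + (γ + 1) / 2 * ε) = γ * pm := by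
    rw [hσε, div_mul_cancel₀ _ hD]
  have heq1' : R * θ = (pm - ε * σ ^ 2 * w₀) * (vm + ε * w₀) := by
    field_simp at heq1
    linear_combination heq1
  have heq2' : R * (θ - θm) = (γ - 1) * (ε ^ 2 * (σ ^ 2 / 2) * w₀ ^ 2 - ε * pm * w₀) := by
    refine mul_left_cancel₀ hσ ?_
    field_simp at heq2
    linear_combination -heq2 / 2
  have hquad := critical_point_quadratic_eq_zero hpm' hσε' heq1' heq2'
  have hcoeff : (γ + 1) / 2 * ε ^ 2 * σ ^ 2 ≠ 0 := by
    have : γ + 1 ≠ 0 := by linarith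
    positivity
  exact eq_zero_or_one_of_sq_eq_self (sub_eq_zero.mp ((mul_eq_zero.mp hquad).resolve_left hcoeff))

theorem critical_points_are_zero_or_one
    (R γ vm θm pm ε σ w₀ θ : ℝ)
    (hR : 0 < R) (hγ : 1 < γ) (hv : 0 < vm) (hθm : 0 < θm)
    (hpm : pm = R * θm / vm)
    (hε : ε ≠ 0) (hσ : σ ≠ 0)
    (hσε : σ ^ 2 = γ * pm / (vm + (γ + 1) / 2 * ε))
    (hpos : 0 < vm + ε * w₀)
    (heq1 : ε * σ ^ 2 * w₀ + R * θ / (vm + ε * w₀) - pm = 0)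
    (heq2 : -(σ * R / (γ - 1)) * (θ - θm) + ε ^ 2 * (σ ^ 3 / 2) * w₀ ^ 2
        - ε * σ * pm * w₀ = 0) :
    w₀ = 0 ∨ w₀ = 1 :=
  critical_points_are_zero_or_one_general R γ vm θm pm ε σ w₀ θ hγ hv hpm hε hσ hσε hpos heq1 heq2
end

section
/- Let g : ℝ⁴ → ℝ be smooth with g(v_-, 0, 0, 0) = 0, ∂g/∂x₁(v_-, 0, 0, 0) = 0 and ∂g/∂x₄(v_-, 0, 0, 0) = 0. Then the function F(w₀, w₁, w₂, ε) := ε⁻² g(v_- + ε w₀, ε² w₁, ε² w₂, ε) for ε ≠ 0 extends to a continuous function on a neighborhood of (w₀, w₁, w₂, 0) for (w₀,w₁,w₂) in any compact set, with F(w₀, w₁, w₂, 0) = ½ w₀² ∂²g/∂x₁²(v_-,0,0,0) + w₀ ∂²g/∂x₁∂x₄(v_-,0,0,0) + w₁ ∂g/∂x₂(v_-,0,0,0) + w₂ ∂g/∂x₃(v_-,0,0,0) + ½ ∂²g/∂x₄²(v_-,0,0,0). -/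
open intervalIntegral

private lemma curve_deriv1 {g : ℝ × ℝ × ℝ × ℝ → ℝ} (hg : ContDiff ℝ (⊤ : ℕ∞) g)
    {c : ℝ → ℝ × ℝ × ℝ × ℝ} {c' : ℝ × ℝ × ℝ × ℝ} {t : ℝ}
    (hc : HasDerivAt c c' t) :
    HasDerivAt (fun s => g (c s)) (fderiv ℝ g (c t) c') t :=
  (hg.differentiable (by simp) (c t)).hasFDerivAt.comp_hasDerivAt t hc

private lemma curve_deriv2 {g : ℝ × ℝ × ℝ × ℝ → ℝ} (hg : ContDiff ℝ (⊤ : ℕ∞) g)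
    {c : ℝ → ℝ × ℝ × ℝ × ℝ} {c' : ℝ → ℝ × ℝ × ℝ × ℝ} {c'' : ℝ × ℝ × ℝ × ℝ} {t₀ : ℝ}
    (h1 : ∀ t, HasDerivAt c (c' t) t) (h2 : HasDerivAt c' c'' t₀) :
    deriv (deriv (fun s => g (c s))) t₀
      = fderiv ℝ (fderiv ℝ g) (c t₀) (c' t₀) (c' t₀) + fderiv ℝ g (c t₀) c'' := by
  have hd : deriv (fun s => g (c s)) = fun t => fderiv ℝ g (c t) (c' t) :=
    funext fun t => (curve_deriv1 hg (h1 t)).deriv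
  rw [hd]
  have hB : HasDerivAt (fun t => fderiv ℝ g (c t))
      (fderiv ℝ (fderiv ℝ g) (c t₀) (c' t₀)) t₀ :=
    (((hg.fderiv_right (m := 1) (WithTop.coe_le_coe.mpr le_top)).differentiable one_ne_zero (c t₀)).hasFDerivAt).comp_hasDerivAt t₀
      (h1 t₀)
  exact (hB.clm_apply h2).deriv

theorem singular_rescaling_extends_continuously
    (g : ℝ × ℝ × ℝ × ℝ → ℝ) (hg : ContDiff ℝ (⊤ : ℕ∞) g) (vm : ℝ)
    (h0 : g (vm, 0, 0, 0) = 0)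
    (hd1 : deriv (fun t => g (t, 0, 0, 0)) vm = 0)
    (hd4 : deriv (fun t => g (vm, 0, 0, t)) 0 = 0) :
    ∃ F : ℝ × ℝ × ℝ × ℝ → ℝ, Continuous F ∧
      (∀ w₀ w₁ w₂ ε : ℝ, ε ≠ 0 →
        F (w₀, w₁, w₂, ε) = ε⁻¹ ^ 2 * g (vm + ε * w₀, ε ^ 2 * w₁, ε ^ 2 * w₂, ε)) ∧
      (∀ w₀ w₁ w₂ : ℝ,
        F (w₀, w₁, w₂, 0)
          = (1 / 2) * w₀ ^ 2 * deriv (deriv (fun t => g (t, 0, 0, 0))) vm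
            + w₀ * deriv (fun t => deriv (fun s => g (t, 0, 0, s)) 0) vm
            + w₁ * deriv (fun t => g (vm, t, 0, 0)) 0
            + w₂ * deriv (fun t => g (vm, 0, t, 0)) 0
            + (1 / 2) * deriv (deriv (fun t => g (vm, 0, 0, t))) 0) := by
  classical
  set q₀ : ℝ × ℝ × ℝ × ℝ := (vm, 0, 0, 0) with hq₀
  set L : (ℝ × ℝ × ℝ × ℝ) →L[ℝ] ℝ := fderiv ℝ g q₀ with hL
  set H := fderiv ℝ (fderiv ℝ g) q₀ with hH
  -- the rescaling map and its composition with g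
  set m : ℝ × ℝ × ℝ × ℝ → ℝ × ℝ × ℝ × ℝ := fun p =>
    (vm + p.2.2.2 * p.1, p.2.2.2 ^ 2 * p.2.1, p.2.2.2 ^ 2 * p.2.2.1, p.2.2.2) with hm
  have hmc : ContDiff ℝ (⊤ : ℕ∞) m := by fun_prop
  set k : ℝ × ℝ × ℝ × ℝ → ℝ := fun p => g (m p) with hk
  have hkc : ContDiff ℝ (⊤ : ℕ∞) k := hg.comp hmc
  set e : ℝ × ℝ × ℝ × ℝ := (0, 0, 0, 1) with he
  set u : ℝ × ℝ × ℝ × ℝ → ℝ := fun p => fderiv ℝ k p e with hu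
  have huc : ContDiff ℝ (⊤ : ℕ∞) u := (hkc.fderiv_right (by simp)).clm_apply contDiff_const
  set D : ℝ × ℝ × ℝ × ℝ → ℝ := fun p => fderiv ℝ u p e with hD
  have hDc2 : ContDiff ℝ (⊤ : ℕ∞) D := (huc.fderiv_right (by simp)).clm_apply contDiff_const
  have hDc : Continuous D := hDc2.continuous
  -- derivative facts along vertical lines
  have hι : ∀ (w₀ w₁ w₂ t : ℝ), HasDerivAt (fun t : ℝ => ((w₀, w₁, w₂, t) : ℝ×ℝ×ℝ×ℝ)) e t := by
    intro w₀ w₁ w₂ t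
    exact (hasDerivAt_const t w₀).prodMk ((hasDerivAt_const t w₁).prodMk
      ((hasDerivAt_const t w₂).prodMk (hasDerivAt_id t)))
  have hφ' : ∀ (w₀ w₁ w₂ t : ℝ),
      HasDerivAt (fun t => k (w₀, w₁, w₂, t)) (u (w₀, w₁, w₂, t)) t := fun w₀ w₁ w₂ t =>
    ((hkc.differentiable (by simp) _).hasFDerivAt).comp_hasDerivAt t (hι w₀ w₁ w₂ t)
  have hφ'' : ∀ (w₀ w₁ w₂ t : ℝ),
      HasDerivAt (fun t => u (w₀, w₁, w₂, t)) (D (w₀, w₁, w₂, t)) t := fun w₀ w₁ w₂ t =>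
    ((huc.differentiable (by simp) _).hasFDerivAt).comp_hasDerivAt t (hι w₀ w₁ w₂ t)
  -- the curve γ_w and its derivatives
  have hγ : ∀ (w₀ w₁ w₂ t : ℝ), HasDerivAt
      (fun t : ℝ => ((vm + t * w₀, t ^ 2 * w₁, t ^ 2 * w₂, t) : ℝ×ℝ×ℝ×ℝ))
      ((w₀, 2 * t * w₁, 2 * t * w₂, 1) : ℝ×ℝ×ℝ×ℝ) t := by
    intro w₀ w₁ w₂ t
    have h1 : HasDerivAt (fun t : ℝ => vm + t * w₀) w₀ t := by
      simpa using ((hasDerivAt_id t).mul_const w₀).const_add vm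
    have h2 : HasDerivAt (fun t : ℝ => t ^ 2 * w₁) (2 * t * w₁) t := by
      simpa using (hasDerivAt_pow 2 t).mul_const w₁
    have h3 : HasDerivAt (fun t : ℝ => t ^ 2 * w₂) (2 * t * w₂) t := by
      simpa using (hasDerivAt_pow 2 t).mul_const w₂
    exact h1.prodMk (h2.prodMk (h3.prodMk (hasDerivAt_id t)))
  have hγ' : ∀ (w₀ w₁ w₂ : ℝ), HasDerivAt
      (fun t : ℝ => ((w₀, 2 * t * w₁, 2 * t * w₂, 1) : ℝ×ℝ×ℝ×ℝ))
      ((0, 2 * w₁, 2 * w₂, 0) : ℝ×ℝ×ℝ×ℝ) 0 := by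
    intro w₀ w₁ w₂
    have h2 : HasDerivAt (fun t : ℝ => 2 * t * w₁) (2 * w₁) 0 := by
      simpa using (((hasDerivAt_id (0:ℝ)).const_mul 2).mul_const w₁)
    have h3 : HasDerivAt (fun t : ℝ => 2 * t * w₂) (2 * w₂) 0 := by
      simpa using (((hasDerivAt_id (0:ℝ)).const_mul 2).mul_const w₂)
    exact (hasDerivAt_const 0 w₀).prodMk (h2.prodMk (h3.prodMk (hasDerivAt_const 0 1)))
  -- identify u (w,0)
  have hLe1 : L (1, 0, 0, 0) = 0 := by
    have hcurve : HasDerivAt (fun t : ℝ => ((t, 0, 0, 0) : ℝ×ℝ×ℝ×ℝ)) ((1,0,0,0) : ℝ×ℝ×ℝ×ℝ) vm :=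
      (hasDerivAt_id vm).prodMk ((hasDerivAt_const vm (0:ℝ)).prodMk
        ((hasDerivAt_const vm (0:ℝ)).prodMk (hasDerivAt_const vm (0:ℝ))))
    have := (curve_deriv1 hg hcurve).deriv
    rw [hd1] at this
    exact this.symm
  have hLe4 : L (0, 0, 0, 1) = 0 := by
    have hcurve : HasDerivAt (fun t : ℝ => ((vm, 0, 0, t) : ℝ×ℝ×ℝ×ℝ)) ((0,0,0,1) : ℝ×ℝ×ℝ×ℝ) 0 :=
      (hasDerivAt_const 0 vm).prodMk ((hasDerivAt_const 0 (0:ℝ)).prodMk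
        ((hasDerivAt_const 0 (0:ℝ)).prodMk (hasDerivAt_id 0)))
    have := (curve_deriv1 hg hcurve).deriv
    rw [hd4] at this
    exact this.symm
  have hkγ : ∀ (w₀ w₁ w₂ : ℝ), (fun t => k (w₀, w₁, w₂, t)) =
      fun t : ℝ => g (vm + t * w₀, t ^ 2 * w₁, t ^ 2 * w₂, t) := by
    intro w₀ w₁ w₂; rfl
  have hu0 : ∀ (w₀ w₁ w₂ : ℝ), u (w₀, w₁, w₂, 0) = 0 := by
    intro w₀ w₁ w₂
    have h1 : HasDerivAt (fun t => k (w₀, w₁, w₂, t)) (L ((w₀, 0, 0, 1) : ℝ×ℝ×ℝ×ℝ)) 0 := by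
      rw [hkγ]
      have := curve_deriv1 hg (hγ w₀ w₁ w₂ 0)
      simpa using this
    have h2 := (hφ' w₀ w₁ w₂ 0).unique h1
    have hvec : ((w₀, 0, 0, 1) : ℝ×ℝ×ℝ×ℝ) = w₀ • ((1,0,0,0) : ℝ×ℝ×ℝ×ℝ) + (0,0,0,1) := by
      simp [Prod.ext_iff]
    rw [h2, hvec, map_add, map_smul, hLe1, hLe4]
    simp
  have hk0 : ∀ (w₀ w₁ w₂ : ℝ), k (w₀, w₁, w₂, 0) = 0 := by
    intro w₀ w₁ w₂
    show g (vm + 0 * w₀, 0 ^ 2 * w₁, 0 ^ 2 * w₂, 0) = 0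
    simpa using h0
  -- define F
  refine ⟨fun p => ∫ s in (0:ℝ)..1, (1 - s) * D (p.1, p.2.1, p.2.2.1, s * p.2.2.2), ?_, ?_, ?_⟩
  · apply continuous_parametric_intervalIntegral_of_continuous'
    show Continuous (Function.uncurry fun (p : ℝ×ℝ×ℝ×ℝ) (s : ℝ) =>
      (1 - s) * D (p.1, p.2.1, p.2.2.1, s * p.2.2.2))
    apply Continuous.mul
    · fun_prop
    · apply hDc.comp
      fun_prop
  · intro w₀ w₁ w₂ ε hε
    -- Taylor with integral remainder
    have hψ : ∀ t : ℝ, HasDerivAt (fun t => k (w₀, w₁, w₂, t) + (ε - t) * u (w₀, w₁, w₂, t))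
        ((ε - t) * D (w₀, w₁, w₂, t)) t := by
      intro t
      have h1 := hφ' w₀ w₁ w₂ t
      have h2 : HasDerivAt (fun t : ℝ => (ε - t)) (-1) t := by
        simpa using ((hasDerivAt_id t).const_sub ε)
      have h3 := h2.mul (hφ'' w₀ w₁ w₂ t)
      have := h1.add h3
      exact this.congr_deriv (by ring)
    have hInt : ∀ a b : ℝ, IntervalIntegrable (fun t => (ε - t) * D (w₀, w₁, w₂, t))
        MeasureTheory.volume a b := by
      intro a b
      apply Continuous.intervalIntegrable
      apply Continuous.mul
      · fun_prop
      · exact hDc.comp (by fun_prop)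
    have hFTC := intervalIntegral.integral_eq_sub_of_hasDerivAt
      (fun t _ => hψ t) (hInt 0 ε)
    rw [hk0, hu0] at hFTC
    simp only [mul_zero, add_zero, sub_zero, zero_add] at hFTC
    -- hFTC : ∫ t in 0..ε, (ε - t) * D (w₀,w₁,w₂,t) = k (w₀,w₁,w₂,ε) + (ε - ε) * u (...)
    have hFTC' : (∫ t in (0:ℝ)..ε, (ε - t) * D (w₀, w₁, w₂, t)) = k (w₀, w₁, w₂, ε) := by
      rw [hFTC]; ring_nf
    -- substitution t = s * ε
    have hsub : (∫ s in (0:ℝ)..1, (1 - s) * D (w₀, w₁, w₂, s * ε))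
        = ε⁻¹ ^ 2 * ∫ t in (0:ℝ)..ε, (ε - t) * D (w₀, w₁, w₂, t) := by
      have hcomp := intervalIntegral.integral_comp_mul_right
        (fun t => (ε - t) * D (w₀, w₁, w₂, t)) hε (a := 0) (b := 1)
      have heq : ∀ s : ℝ, (ε - s * ε) * D (w₀, w₁, w₂, s * ε)
          = ε * ((1 - s) * D (w₀, w₁, w₂, s * ε)) := by intro s; ring
      simp only [heq] at hcomp
      rw [intervalIntegral.integral_const_mul] at hcomp
      rw [zero_mul, one_mul] at hcomp
      have := congrArg (fun x => ε⁻¹ * x) hcomp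
      simp only [smul_eq_mul] at this ⊢
      rw [← mul_assoc, inv_mul_cancel₀ hε, one_mul] at this
      rw [this]; ring
    show (∫ s in (0:ℝ)..1, (1 - s) * D (w₀, w₁, w₂, s * ε))
      = ε⁻¹ ^ 2 * g (vm + ε * w₀, ε ^ 2 * w₁, ε ^ 2 * w₂, ε)
    rw [hsub, hFTC']
  · intro w₀ w₁ w₂
    -- value at ε = 0
    have hval : (∫ s in (0:ℝ)..1, (1 - s) * D (w₀, w₁, w₂, s * 0))
        = (1/2) * D (w₀, w₁, w₂, 0) := by
      simp only [mul_zero]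
      rw [intervalIntegral.integral_mul_const]
      have : (∫ s in (0:ℝ)..1, (1 - s)) = 1/2 := by
        rw [intervalIntegral.integral_sub intervalIntegrable_const
          (Continuous.intervalIntegrable (by fun_prop) 0 1)]
        norm_num [integral_id]
      rw [this]
    -- compute D (w,0) via the second-derivative chain rule
    have hDval : D (w₀, w₁, w₂, 0)
        = w₀ ^ 2 * H (1,0,0,0) (1,0,0,0) + 2 * w₀ * H (1,0,0,0) (0,0,0,1)
          + H (0,0,0,1) (0,0,0,1) + 2 * w₁ * L (0,1,0,0) + 2 * w₂ * L (0,0,1,0) := by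
      have hD0 : D (w₀, w₁, w₂, 0) = deriv (deriv (fun t => k (w₀, w₁, w₂, t))) 0 := by
        have h1 : deriv (fun t => k (w₀, w₁, w₂, t)) = fun t => u (w₀, w₁, w₂, t) :=
          funext fun t => (hφ' w₀ w₁ w₂ t).deriv
        rw [h1]
        exact ((hφ'' w₀ w₁ w₂ 0).deriv).symm
      rw [hD0, hkγ]
      have hcd2 := curve_deriv2 hg (c' := fun t => ((w₀, 2 * t * w₁, 2 * t * w₂, 1) : ℝ×ℝ×ℝ×ℝ))
        (fun t => hγ w₀ w₁ w₂ t) (hγ' w₀ w₁ w₂)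
      rw [hcd2]
      have hpt : ((vm + 0 * w₀, 0 ^ 2 * w₁, 0 ^ 2 * w₂, (0:ℝ)) : ℝ×ℝ×ℝ×ℝ) = q₀ := by
        rw [hq₀]; norm_num
      have hv1 : ((w₀, 2 * 0 * w₁, 2 * 0 * w₂, (1:ℝ)) : ℝ×ℝ×ℝ×ℝ) = (w₀, 0, 0, 1) := by
        norm_num
      rw [hpt]
      have hbeta : ((fun t : ℝ => ((w₀, 2 * t * w₁, 2 * t * w₂, (1:ℝ)) : ℝ×ℝ×ℝ×ℝ)) 0)
          = ((w₀, 0, 0, 1) : ℝ×ℝ×ℝ×ℝ) := by norm_num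
      rw [hv1, ← hH, ← hL]
      -- expand by linearity
      have hvec : ((w₀, 0, 0, 1) : ℝ×ℝ×ℝ×ℝ) = w₀ • ((1,0,0,0) : ℝ×ℝ×ℝ×ℝ) + (0,0,0,1) := by
        simp [Prod.ext_iff]
      have hvec2 : ((0, 2*w₁, 2*w₂, 0) : ℝ×ℝ×ℝ×ℝ)
          = (2*w₁) • ((0,1,0,0) : ℝ×ℝ×ℝ×ℝ) + (2*w₂) • ((0,0,1,0) : ℝ×ℝ×ℝ×ℝ) := by
        simp [Prod.ext_iff]
      have hsymm : H (0,0,0,1) (1,0,0,0) = H (1,0,0,0) (0,0,0,1) :=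
        second_derivative_symmetric (f := g) (f' := fderiv ℝ g) (f'' := H)
          (fun y => (hg.differentiable (by simp) y).hasFDerivAt)
          (((hg.fderiv_right (m := 1) (WithTop.coe_le_coe.mpr le_top)).differentiable one_ne_zero q₀).hasFDerivAt) _ _
      rw [hvec, hvec2]
      simp only [map_add, map_smul, ContinuousLinearMap.add_apply,
        ContinuousLinearMap.smul_apply, smul_eq_mul]
      rw [hsymm]
      ring
    -- compute the five derivative expressions in the statement
    have hA : deriv (deriv (fun t => g (t, 0, 0, 0))) vm = H (1,0,0,0) (1,0,0,0) := by
      have hcurve : ∀ t : ℝ, HasDerivAt (fun t : ℝ => ((t, 0, 0, 0) : ℝ×ℝ×ℝ×ℝ))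
          ((1,0,0,0) : ℝ×ℝ×ℝ×ℝ) t := fun t =>
        (hasDerivAt_id t).prodMk ((hasDerivAt_const t (0:ℝ)).prodMk
          ((hasDerivAt_const t (0:ℝ)).prodMk (hasDerivAt_const t (0:ℝ))))
      have := curve_deriv2 hg (c' := fun _ => ((1,0,0,0) : ℝ×ℝ×ℝ×ℝ))
        hcurve (hasDerivAt_const vm _)
      rw [this]
      simp [hH, hq₀]
    have hE : deriv (deriv (fun t => g (vm, 0, 0, t))) 0 = H (0,0,0,1) (0,0,0,1) := by
      have hcurve : ∀ t : ℝ, HasDerivAt (fun t : ℝ => ((vm, 0, 0, t) : ℝ×ℝ×ℝ×ℝ))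
          ((0,0,0,1) : ℝ×ℝ×ℝ×ℝ) t := fun t =>
        (hasDerivAt_const t vm).prodMk ((hasDerivAt_const t (0:ℝ)).prodMk
          ((hasDerivAt_const t (0:ℝ)).prodMk (hasDerivAt_id t)))
      have := curve_deriv2 hg (c' := fun _ => ((0,0,0,1) : ℝ×ℝ×ℝ×ℝ))
        hcurve (hasDerivAt_const 0 _)
      rw [this]
      simp [hH, hq₀]
    have hC : deriv (fun t => g (vm, t, 0, 0)) 0 = L (0,1,0,0) := by
      have hcurve : HasDerivAt (fun t : ℝ => ((vm, t, 0, 0) : ℝ×ℝ×ℝ×ℝ))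
          ((0,1,0,0) : ℝ×ℝ×ℝ×ℝ) 0 :=
        (hasDerivAt_const 0 vm).prodMk ((hasDerivAt_id 0).prodMk
          ((hasDerivAt_const 0 (0:ℝ)).prodMk (hasDerivAt_const 0 (0:ℝ))))
      exact (curve_deriv1 hg hcurve).deriv
    have hDc' : deriv (fun t => g (vm, 0, t, 0)) 0 = L (0,0,1,0) := by
      have hcurve : HasDerivAt (fun t : ℝ => ((vm, 0, t, 0) : ℝ×ℝ×ℝ×ℝ))
          ((0,0,1,0) : ℝ×ℝ×ℝ×ℝ) 0 :=
        (hasDerivAt_const 0 vm).prodMk ((hasDerivAt_const 0 (0:ℝ)).prodMk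
          ((hasDerivAt_id 0).prodMk (hasDerivAt_const 0 (0:ℝ))))
      exact (curve_deriv1 hg hcurve).deriv
    have hB : deriv (fun t => deriv (fun s => g (t, 0, 0, s)) 0) vm = H (1,0,0,0) (0,0,0,1) := by
      have hinner : (fun t => deriv (fun s => g (t, 0, 0, s)) 0)
          = fun t => fderiv ℝ g (t, 0, 0, 0) ((0,0,0,1) : ℝ×ℝ×ℝ×ℝ) := by
        funext t
        have hcurve : HasDerivAt (fun s : ℝ => ((t, 0, 0, s) : ℝ×ℝ×ℝ×ℝ))
            ((0,0,0,1) : ℝ×ℝ×ℝ×ℝ) 0 :=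
          (hasDerivAt_const 0 t).prodMk ((hasDerivAt_const 0 (0:ℝ)).prodMk
            ((hasDerivAt_const 0 (0:ℝ)).prodMk (hasDerivAt_id 0)))
        exact (curve_deriv1 hg hcurve).deriv
      rw [hinner]
      have hcurve : HasDerivAt (fun t : ℝ => ((t, 0, 0, 0) : ℝ×ℝ×ℝ×ℝ))
          ((1,0,0,0) : ℝ×ℝ×ℝ×ℝ) vm :=
        (hasDerivAt_id vm).prodMk ((hasDerivAt_const vm (0:ℝ)).prodMk
          ((hasDerivAt_const vm (0:ℝ)).prodMk (hasDerivAt_const vm (0:ℝ))))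
      have hBd : HasDerivAt (fun t : ℝ => fderiv ℝ g ((t, 0, 0, 0) : ℝ×ℝ×ℝ×ℝ))
          (H ((1,0,0,0) : ℝ×ℝ×ℝ×ℝ)) vm :=
        (((hg.fderiv_right (m := 1) (WithTop.coe_le_coe.mpr le_top)).differentiable one_ne_zero q₀).hasFDerivAt).comp_hasDerivAt vm
          hcurve
      have := (hBd.clm_apply (hasDerivAt_const vm ((0,0,0,1) : ℝ×ℝ×ℝ×ℝ))).deriv
      rw [this]
      simp
    show (∫ s in (0:ℝ)..1, (1 - s) * D (w₀, w₁, w₂, s * 0)) = _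
    rw [hval, hDval, hA, hB, hC, hDc', hE]
    ring
end

section
/- Let A > 0, ε > 0, C ≥ 0 with Cε < A, and let ṽ : ℝ → ℝ be differentiable with v_- < ṽ(ξ) < v_+ for all ξ, v_+ − v_- = ε, ṽ(0) = (v_- + v_+)/2, and |ṽ′(ξ) − A(v_+ − ṽ(ξ))(ṽ(ξ) − v_-)| ≤ Cε (v_+ − ṽ(ξ))(ṽ(ξ) − v_-) for all ξ. Then there exist constants C₂, C₁ > 0 (depending only on A and C) with |ṽ(ξ) − v_-| ≤ C₂ ε e^{−C₁ ε |ξ|} for all ξ ≤ 0 and |ṽ(ξ) − v_+| ≤ C₂ ε e^{−C₁ ε |ξ|} for all ξ ≥ 0. -/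
open Real

theorem exponential_tail_estimate
    (vm vp A C ε : ℝ) (hlt : vm < vp) (hε : ε = vp - vm)
    (hA : 0 < A) (hC : 0 ≤ C) (hCε : C * ε < A)
    (v : ℝ → ℝ) (hdiff : Differentiable ℝ v)
    (hrange : ∀ ξ : ℝ, vm < v ξ ∧ v ξ < vp)
    (hmid : v 0 = (vm + vp) / 2)
    (hode : ∀ ξ : ℝ,
      |deriv v ξ - A * (vp - v ξ) * (v ξ - vm)| ≤ C * ε * (vp - v ξ) * (v ξ - vm)) :
    ∃ C₂ > 0, ∃ C₁ > 0,
      (∀ ξ ≤ (0 : ℝ), |v ξ - vm| ≤ C₂ * ε * Real.exp (-C₁ * ε * |ξ|)) ∧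
      (∀ ξ ≥ (0 : ℝ), |v ξ - vp| ≤ C₂ * ε * Real.exp (-C₁ * ε * |ξ|)) := by
  have hεpos : 0 < ε := by rw [hε]; linarith
  set a := A - C * ε with ha
  have hapos : 0 < a := by rw [ha]; linarith
  set k := a * ε with hk
  have hkpos : 0 < k := mul_pos hapos hεpos
  set g : ℝ → ℝ := fun ξ => Real.log (v ξ - vm) - Real.log (vp - v ξ) - k * ξ with hg
  have hderiv : ∀ ξ, HasDerivAt g
      (deriv v ξ / (v ξ - vm) + deriv v ξ / (vp - v ξ) - k) ξ := by
    intro ξ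
    have h1 : 0 < v ξ - vm := sub_pos.mpr (hrange ξ).1
    have h2 : 0 < vp - v ξ := sub_pos.mpr (hrange ξ).2
    have hv : HasDerivAt v (deriv v ξ) ξ := (hdiff ξ).hasDerivAt
    have hd1 : HasDerivAt (fun ξ => v ξ - vm) (deriv v ξ) ξ := hv.sub_const vm
    have hd2 : HasDerivAt (fun ξ => vp - v ξ) (-deriv v ξ) ξ := hv.const_sub vp
    have hl1 := hd1.log (ne_of_gt h1)
    have hl2 := hd2.log (ne_of_gt h2)
    have hcast : HasDerivAt (fun ξ : ℝ => k * ξ) k ξ := by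
      simpa using (hasDerivAt_id ξ).const_mul k
    have := (hl1.sub hl2).sub hcast
    refine this.congr_deriv ?_
    ring
  have hgdiff : Differentiable ℝ g := fun ξ => (hderiv ξ).differentiableAt
  have hderiv_nonneg : ∀ ξ, 0 ≤ deriv g ξ := by
    intro ξ
    rw [(hderiv ξ).deriv]
    have h1 : 0 < v ξ - vm := sub_pos.mpr (hrange ξ).1
    have h2 : 0 < vp - v ξ := sub_pos.mpr (hrange ξ).2
    have hode' := (abs_le.mp (hode ξ)).1
    have hlow : a * ((vp - v ξ) * (v ξ - vm)) ≤ deriv v ξ := by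
      rw [ha]; nlinarith [hode']
    have hsum : k ≤ deriv v ξ / (v ξ - vm) + deriv v ξ / (vp - v ξ) := by
      rw [div_add_div _ _ (ne_of_gt h1) (ne_of_gt h2), le_div_iff₀ (mul_pos h1 h2)]
      calc k * ((v ξ - vm) * (vp - v ξ))
          = ε * (a * ((vp - v ξ) * (v ξ - vm))) := by rw [hk]; ring
        _ ≤ ε * deriv v ξ := mul_le_mul_of_nonneg_left hlow hεpos.le
        _ = deriv v ξ * (vp - v ξ) + (v ξ - vm) * deriv v ξ := by rw [hε]; ring
    linarith
  have hmono : Monotone g := monotone_of_deriv_nonneg hgdiff hderiv_nonneg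
  have hg0 : g 0 = 0 := by
    have heq : v 0 - vm = vp - v 0 := by rw [hmid]; ring
    simp [hg, heq]
  refine ⟨1, one_pos, a, hapos, ?_, ?_⟩
  · intro ξ hξ
    have h1 : 0 < v ξ - vm := sub_pos.mpr (hrange ξ).1
    have h2 : 0 < vp - v ξ := sub_pos.mpr (hrange ξ).2
    have hle : g ξ ≤ 0 := hg0 ▸ hmono hξ
    have hlog : Real.log (v ξ - vm) ≤ Real.log (vp - v ξ) + k * ξ := by
      simp only [hg] at hle; linarith
    have hexp : v ξ - vm ≤ (vp - v ξ) * Real.exp (k * ξ) := by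
      calc v ξ - vm = Real.exp (Real.log (v ξ - vm)) := (Real.exp_log h1).symm
        _ ≤ Real.exp (Real.log (vp - v ξ) + k * ξ) := Real.exp_le_exp.mpr hlog
        _ = (vp - v ξ) * Real.exp (k * ξ) := by rw [Real.exp_add, Real.exp_log h2]
    have habs : |ξ| = -ξ := abs_of_nonpos hξ
    have hkey : -a * ε * |ξ| = k * ξ := by rw [habs, hk]; ring
    rw [abs_of_pos h1, hkey]
    have hvpε : vp - v ξ ≤ ε := by rw [hε]; linarith [(hrange ξ).1]
    calc v ξ - vm ≤ (vp - v ξ) * Real.exp (k * ξ) := hexp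
      _ ≤ ε * Real.exp (k * ξ) := by
          exact mul_le_mul_of_nonneg_right hvpε (Real.exp_pos _).le
      _ = 1 * ε * Real.exp (k * ξ) := by ring
  · intro ξ hξ
    have h1 : 0 < v ξ - vm := sub_pos.mpr (hrange ξ).1
    have h2 : 0 < vp - v ξ := sub_pos.mpr (hrange ξ).2
    have hle : 0 ≤ g ξ := hg0 ▸ hmono hξ
    have hlog : Real.log (vp - v ξ) ≤ Real.log (v ξ - vm) + -(k * ξ) := by
      simp only [hg] at hle; linarith
    have hexp : vp - v ξ ≤ (v ξ - vm) * Real.exp (-(k * ξ)) := by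
      calc vp - v ξ = Real.exp (Real.log (vp - v ξ)) := (Real.exp_log h2).symm
        _ ≤ Real.exp (Real.log (v ξ - vm) + -(k * ξ)) := Real.exp_le_exp.mpr hlog
        _ = (v ξ - vm) * Real.exp (-(k * ξ)) := by rw [Real.exp_add, Real.exp_log h1]
    have habs : |ξ| = ξ := abs_of_nonneg hξ
    have hkey : -a * ε * |ξ| = -(k * ξ) := by rw [habs, hk]; ring
    have habs2 : |v ξ - vp| = vp - v ξ := by rw [abs_sub_comm, abs_of_pos h2]
    rw [habs2, hkey]
    have hvmε : v ξ - vm ≤ ε := by rw [hε]; linarith [(hrange ξ).2]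
    calc vp - v ξ ≤ (v ξ - vm) * Real.exp (-(k * ξ)) := hexp
      _ ≤ ε * Real.exp (-(k * ξ)) := by
          exact mul_le_mul_of_nonneg_right hvmε (Real.exp_pos _).le
      _ = 1 * ε * Real.exp (-(k * ξ)) := by ring
end

section
/- Let f : ℝ → ℝ be differentiable, a < b, and suppose f(ξ) ∈ (a, b) for all ξ with lim_{ξ→−∞} f(ξ) = a, lim_{ξ→+∞} f(ξ) = b, and f′(ξ) ≥ c (b − f(ξ))(f(ξ) − a) for some c > 0 and all ξ. Then f is strictly increasing on ℝ. -/
theorem shock_profile_strictly_monotone_general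
    (a b c : ℝ) (hc : 0 < c)
    (f : ℝ → ℝ)
    (hrange : ∀ ξ : ℝ, f ξ ∈ Set.Ioo a b)
    (hlb : ∀ ξ : ℝ, c * (b - f ξ) * (f ξ - a) ≤ deriv f ξ) :
    StrictMono f :=
  strictMono_of_deriv_pos fun ξ =>
    (mul_pos (mul_pos hc (sub_pos.2 (hrange ξ).2)) (sub_pos.2 (hrange ξ).1)).trans_le (hlb ξ)

theorem shock_profile_strictly_monotone
    (a b c : ℝ) (hab : a < b) (hc : 0 < c)
    (f : ℝ → ℝ) (hf : Differentiable ℝ f)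
    (hrange : ∀ ξ : ℝ, f ξ ∈ Set.Ioo a b)
    (hlima : Filter.Tendsto f Filter.atBot (nhds a))
    (hlimb : Filter.Tendsto f Filter.atTop (nhds b))
    (hlb : ∀ ξ : ℝ, c * (b - f ξ) * (f ξ - a) ≤ deriv f ξ) :
    StrictMono f :=
  shock_profile_strictly_monotone_general a b c hc f hrange hlb
end
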